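/- arXiv:math/0502335 — 3 statements merged into one kernel-verified Lean document; each statement's English description precedes it below -/
import Mathlib

section
/- Let H be a Hilbert space and let w : H → H be a Hilbert–Schmidt operator whose Hilbert–Schmidt norm satisfies ‖w‖_HS ≤ √n. If there exists an n-dimensional subspace F of H such that w restricted to F is the identity on F, then w has rank at most n. -/
/-!
Bessel's inequality, applied to `w†` in a Hilbert basis, shows that `∑ ‖w vₐ‖²` over any
orthonormal family `v` is at most `‖w‖²_HS ≤ n`. An orthonormal basis of `F` already contributes
`n` to this sum, so extending it by a unit vector `u ⊥ F` gives `n + ‖w u‖² ≤ n`. Hence `w`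
vanishes on `Fᗮ`, and its range lies in `F`.

The sums are taken in `ℝ≥0∞` (via `‖·‖ₑ`), where double series can be interchanged without
summability side conditions.
-/

open scoped InnerProductSpace ENNReal

open Module ContinuousLinearMap

section HilbertSchmidt

variable {𝕜 E F ι κ : Type*} [RCLike 𝕜] [NormedAddCommGroup E] [InnerProductSpace 𝕜 E]
  [NormedAddCommGroup F] [InnerProductSpace 𝕜 F]

theorem enorm_sq_eq_ofReal_norm_sq (x : E) : ‖x‖ₑ ^ 2 = ENNReal.ofReal (‖x‖ ^ 2) := by
  rw [ENNReal.ofReal_pow (norm_nonneg x), ofReal_norm]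

theorem enorm_inner_symm (x y : E) : ‖⟪x, y⟫_𝕜‖ₑ = ‖⟪y, x⟫_𝕜‖ₑ := by
  rw [← ofReal_norm, norm_inner_symm, ofReal_norm]

theorem Orthonormal.tsum_enorm_inner_sq_le {v : ι → E} (hv : Orthonormal 𝕜 v) (x : E) :
    ∑' i, ‖⟪v i, x⟫_𝕜‖ₑ ^ 2 ≤ ‖x‖ₑ ^ 2 := by
  simp_rw [enorm_sq_eq_ofReal_norm_sq]
  rw [← ENNReal.ofReal_tsum_of_nonneg (fun _ => by positivity) (hv.inner_products_summable x)]
  exact ENNReal.ofReal_le_ofReal (hv.tsum_inner_products_le x)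

theorem HilbertBasis.hasSum_norm_inner_sq (b : HilbertBasis ι 𝕜 E) (x : E) :
    HasSum (fun i => ‖⟪b i, x⟫_𝕜‖ ^ 2) (‖x‖ ^ 2) := by
  have h := RCLike.reCLM.hasSum (b.hasSum_inner_mul_inner x x)
  simpa only [RCLike.reCLM_apply, inner_mul_symm_re_eq_norm, norm_mul, norm_inner_symm x, ← sq,
    inner_self_eq_norm_sq] using h

theorem HilbertBasis.tsum_enorm_inner_sq (b : HilbertBasis ι 𝕜 E) (x : E) :
    ∑' i, ‖⟪b i, x⟫_𝕜‖ₑ ^ 2 = ‖x‖ₑ ^ 2 := by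
  simp_rw [enorm_sq_eq_ofReal_norm_sq]
  rw [← ENNReal.ofReal_tsum_of_nonneg (fun _ => by positivity) (b.hasSum_norm_inner_sq x).summable,
    (b.hasSum_norm_inner_sq x).tsum_eq]

variable [CompleteSpace E] [CompleteSpace F]

theorem ContinuousLinearMap.tsum_enorm_apply_sq_le_adjoint (c : HilbertBasis κ 𝕜 F)
    (T : E →L[𝕜] F) {v : ι → E} (hv : Orthonormal 𝕜 v) :
    ∑' a, ‖T (v a)‖ₑ ^ 2 ≤ ∑' j, ‖adjoint T (c j)‖ₑ ^ 2 :=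
  calc ∑' a, ‖T (v a)‖ₑ ^ 2
      = ∑' a, ∑' j, ‖⟪c j, T (v a)⟫_𝕜‖ₑ ^ 2 := by simp_rw [c.tsum_enorm_inner_sq]
    _ = ∑' j, ∑' a, ‖⟪v a, adjoint T (c j)⟫_𝕜‖ₑ ^ 2 := by
        rw [ENNReal.tsum_comm]
        simp_rw [adjoint_inner_right, enorm_inner_symm (c _)]
    _ ≤ ∑' j, ‖adjoint T (c j)‖ₑ ^ 2 := ENNReal.tsum_le_tsum fun j => hv.tsum_enorm_inner_sq_le _

theorem HilbertBasis.tsum_enorm_apply_sq_le (b : HilbertBasis ι 𝕜 E) (T : E →L[𝕜] F)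
    {α : Type*} {v : α → E} (hv : Orthonormal 𝕜 v) :
    ∑' a, ‖T (v a)‖ₑ ^ 2 ≤ ∑' i, ‖T (b i)‖ₑ ^ 2 := by
  obtain ⟨_, c, -⟩ := exists_hilbertBasis 𝕜 F
  calc ∑' a, ‖T (v a)‖ₑ ^ 2 ≤ ∑' j, ‖adjoint T (c j)‖ₑ ^ 2 := T.tsum_enorm_apply_sq_le_adjoint c hv
    _ ≤ ∑' i, ‖T (b i)‖ₑ ^ 2 := by
        simpa using (adjoint T).tsum_enorm_apply_sq_le_adjoint b c.orthonormal

theorem ContinuousLinearMap.apply_eq_zero_of_mem_orthogonal (b : HilbertBasis ι 𝕜 E)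
    {T : E →L[𝕜] E} {K : Submodule 𝕜 E} [FiniteDimensional 𝕜 K] (hfix : ∀ x ∈ K, T x = x)
    (hHS : ∑' i, ‖T (b i)‖ₑ ^ 2 ≤ finrank 𝕜 K) {y : E} (hy : y ∈ Kᗮ) : T y = 0 := by
  obtain rfl | hy0 := eq_or_ne y 0
  · exact map_zero T
  set u := (‖y‖ : 𝕜)⁻¹ • y
  suffices T u = 0 by simpa [u, hy0] using this
  let e := stdOrthonormalBasis 𝕜 K
  have he : Orthonormal 𝕜 fun k => (e k : E) := e.orthonormal.comp_linearIsometry K.subtypeₗᵢ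
  have hv : Orthonormal 𝕜 (Matrix.vecCons u fun k => (e k : E)) :=
    orthonormal_vecCons_iff.mpr ⟨norm_smul_inv_norm hy0,
      fun k => K.inner_left_of_mem_orthogonal (e k).2 (Kᗮ.smul_mem _ hy), he⟩
  have h := (b.tsum_enorm_apply_sq_le T hv).trans hHS
  rw [tsum_fintype, Fin.sum_univ_succ] at h
  simp only [Matrix.cons_val_zero, Matrix.cons_val_succ, hfix _ (e _).2, he.enorm_eq_one,
    one_pow, Finset.sum_const, Finset.card_univ, Fintype.card_fin, nsmul_eq_mul, mul_one] at h
  have : ‖T u‖ₑ ^ 2 ≤ 0 :=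
    ENNReal.le_of_add_le_add_right (ENNReal.natCast_ne_top _) (by rwa [zero_add])
  simpa using this

theorem ContinuousLinearMap.range_le_of_tsum_enorm_sq_le_finrank (b : HilbertBasis ι 𝕜 E)
    {T : E →L[𝕜] E} {K : Submodule 𝕜 E} [FiniteDimensional 𝕜 K] (hfix : ∀ x ∈ K, T x = x)
    (hHS : ∑' i, ‖T (b i)‖ₑ ^ 2 ≤ finrank 𝕜 K) : LinearMap.range (T : E →ₗ[𝕜] E) ≤ K := by
  rintro _ ⟨x, rfl⟩
  obtain ⟨y, hy, z, hz, rfl⟩ := K.exists_add_mem_mem_orthogonal x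
  simpa [hfix y hy, T.apply_eq_zero_of_mem_orthogonal b hfix hHS hz] using hy

end HilbertSchmidt

theorem stmt0_general {H : Type*} [NormedAddCommGroup H] [InnerProductSpace ℂ H] [CompleteSpace H]
    {ι : Type*} (b : HilbertBasis ι ℂ H) (w : H →L[ℂ] H) (n : ℕ)
    (hsum : Summable (fun i => ‖w (b i)‖ ^ 2))
    (hHS : ∑' i, ‖w (b i)‖ ^ 2 ≤ (n : ℝ))
    (F : Submodule ℂ H) (hF : Module.finrank ℂ F = n)
    (hfix : ∀ x ∈ F, w x = x) :
    Module.rank ℂ ↥(LinearMap.range (w : H →ₗ[ℂ] H)) ≤ n := by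
  have hHS' : ∑' i, ‖w (b i)‖ₑ ^ 2 ≤ n := by
    simp_rw [enorm_sq_eq_ofReal_norm_sq]
    rw [← ENNReal.ofReal_tsum_of_nonneg (fun _ => by positivity) hsum, ← ENNReal.ofReal_natCast]
    exact ENNReal.ofReal_le_ofReal hHS
  by_cases hFfin : FiniteDimensional ℂ F
  · calc Module.rank ℂ (LinearMap.range (w : H →ₗ[ℂ] H))
        ≤ Module.rank ℂ F :=
          Submodule.rank_mono (w.range_le_of_tsum_enorm_sq_le_finrank b hfix (hF ▸ hHS'))
      _ = n := by rw [← Module.finrank_eq_rank, hF]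
  · have hn : n = 0 := hF ▸ Module.finrank_of_not_finite hFfin
    have := w.range_le_of_tsum_enorm_sq_le_finrank b (K := ⊥) (by simp) (by simpa [hn] using hHS')
    rw [le_bot_iff.mp this, rank_bot]
    exact zero_le

/-- If `w` is a Hilbert–Schmidt operator on a complex Hilbert space `H`
(Hilbert–Schmidt norm computed via a Hilbert basis `b`) with `‖w‖_HS ≤ √n`, and `w`
restricts to the identity on an `n`-dimensional subspace `F`, then `w` has rank at most `n`. -/
theorem stmt0 {H : Type*} [NormedAddCommGroup H] [InnerProductSpace ℂ H] [CompleteSpace H]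
    {ι : Type*} (b : HilbertBasis ι ℂ H) (w : H →L[ℂ] H) (n : ℕ) (hn : 0 < n)
    (hsum : Summable (fun i => ‖w (b i)‖ ^ 2))
    (hHS : ∑' i, ‖w (b i)‖ ^ 2 ≤ (n : ℝ))
    (F : Submodule ℂ H) (hF : Module.finrank ℂ F = n)
    (hfix : ∀ x ∈ F, w x = x) :
    Module.rank ℂ ↥(LinearMap.range (w : H →ₗ[ℂ] H)) ≤ n :=
  stmt0_general b w n hsum hHS F hF hfix
end

section
/- Let H be a Hilbert space, n a positive natural number, and w a Hilbert–Schmidt operator on H with ‖w‖_HS ≤ √n. Suppose w restricts to the identity on an n-dimensional subspace F. Then the singular values of w satisfy s_k(w) = 1 for 1 ≤ k ≤ n and s_k(w) = 0 for k > n, so that ‖w‖_HS² = n. -/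
/-!
Let `P` be the orthogonal projection onto `F` and `(bᵢ)` an orthonormal basis of `F`. Summing
`1 = ‖w bᵢ‖² = ∑ₖ sₖ² |⟪eₖ, bᵢ⟫|²` over `i` gives `n = ∑ₖ sₖ² ‖P eₖ‖²`. As `‖P eₖ‖ ≤ 1` and
`∑ₖ sₖ² ≤ n`, every term satisfies `sₖ² ‖P eₖ‖² = sₖ²`, so `sₖ ≠ 0` forces `‖P eₖ‖ = ‖eₖ‖`,
i.e. `eₖ ∈ F`, and then `sₖ = ‖w eₖ‖ = ‖eₖ‖ = 1`. A non-increasing `{0, 1}`-valued sequence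
with sum `n` is `1` exactly below `n`.
-/

open scoped InnerProductSpace
open Finset

theorem Summable.mul_eq_self_of_tsum_le_tsum_mul {ι : Type*} {a c : ι → ℝ} (ha : Summable a)
    (ha0 : ∀ i, 0 ≤ a i) (hc0 : ∀ i, 0 ≤ c i) (hc1 : ∀ i, c i ≤ 1)
    (h : ∑' i, a i ≤ ∑' i, a i * c i) (i : ι) : a i * c i = a i := by
  have hle : ∀ j, a j * c j ≤ a j := fun j => mul_le_of_le_one_right (ha0 j) (hc1 j)
  refine (hle i).eq_or_lt.resolve_right fun hlt => h.not_gt ?_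
  exact Summable.tsum_lt_tsum hle hlt
    (ha.of_nonneg_of_le (fun j => mul_nonneg (ha0 j) (hc0 j)) hle) ha

theorem Antitone.eq_one_of_lt_of_hasSum {s : ℕ → ℝ} (hanti : Antitone s)
    (h01 : ∀ k, s k = 0 ∨ s k = 1) {n : ℕ} (hs : HasSum s n) :
    (∀ k < n, s k = 1) ∧ ∀ k, n ≤ k → s k = 0 := by
  have hnn : ∀ k, 0 ≤ s k := fun k => by rcases h01 k with h | h <;> simp [h]
  have hle : ∀ k, s k ≤ 1 := fun k => by rcases h01 k with h | h <;> simp [h]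
  have hsn : s n = 0 := by
    refine (h01 n).resolve_right fun h => ?_
    have hsum : ∑ k ∈ range (n + 1), s k = n + 1 := by
      rw [sum_congr rfl fun k hk => le_antisymm (hle k)
        (h ▸ hanti (Nat.lt_succ_iff.1 (mem_range.1 hk)))]
      simp
    linarith [sum_le_hasSum (range (n + 1)) (fun k _ => hnn k) hs]
  have hzero : ∀ k, n ≤ k → s k = 0 := fun k hk => le_antisymm (hsn ▸ hanti hk) (hnn k)
  have hfin : ∑ k ∈ range n, s k = ∑ _k ∈ range n, (1 : ℝ) := by
    rw [← hs.unique (hasSum_sum_of_ne_finset_zero (s := range n) fun k hk =>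
      hzero k (by simpa using hk))]
    simp
  exact ⟨fun k hk => (sum_eq_sum_iff_of_le fun k _ => hle k).1 hfin k (mem_range.2 hk), hzero⟩

section

variable {ι 𝕜 E : Type*} [RCLike 𝕜] [NormedAddCommGroup E] [InnerProductSpace 𝕜 E]

theorem OrthogonalFamily.hasSum_norm_sq_tsum [CompleteSpace E] {G : ι → Type*}
    [∀ i, NormedAddCommGroup (G i)] [∀ i, InnerProductSpace 𝕜 (G i)]
    {V : ∀ i, G i →ₗᵢ[𝕜] E} (hV : OrthogonalFamily 𝕜 G V) {l : ∀ i, G i}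
    (hl : Summable fun i => ‖l i‖ ^ 2) :
    HasSum (fun i => ‖l i‖ ^ 2) (‖∑' i, V i (l i)‖ ^ 2) :=
  (((continuous_norm.pow 2).tendsto _).comp
    ((hV.summable_iff_norm_sq_summable l).2 hl).hasSum).congr fun s => hV.norm_sum l s

theorem Orthonormal.norm_tsum_smul_sq [CompleteSpace E] {v : ι → E} (hv : Orthonormal 𝕜 v)
    {c : ι → 𝕜} (hc : Summable fun i => ‖c i‖ ^ 2) :
    ‖∑' i, c i • v i‖ ^ 2 = ∑' i, ‖c i‖ ^ 2 :=
  (hv.orthogonalFamily.hasSum_norm_sq_tsum hc).tsum_eq.symm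

theorem Orthonormal.summable_sq_mul_norm_inner_sq {v : ι → E} (hv : Orthonormal 𝕜 v)
    {s : ι → ℝ} (hs : Summable fun i => s i ^ 2) (x : E) :
    Summable fun i => s i ^ 2 * ‖⟪v i, x⟫_𝕜‖ ^ 2 := by
  refine (hs.mul_right (‖x‖ ^ 2)).of_nonneg_of_le (fun i => by positivity) fun i => ?_
  have : ‖⟪v i, x⟫_𝕜‖ ≤ ‖x‖ := by simpa [hv.1 i] using norm_inner_le_norm (𝕜 := 𝕜) (v i) x
  gcongr

theorem OrthonormalBasis.norm_starProjection_sq_eq_sum [Fintype ι] {U : Submodule 𝕜 E}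
    [U.HasOrthogonalProjection] (b : OrthonormalBasis ι 𝕜 U) (v : E) :
    ‖U.starProjection v‖ ^ 2 = ∑ i, ‖⟪v, (b i : E)⟫_𝕜‖ ^ 2 := by
  rw [U.starProjection_apply, Submodule.norm_coe, ← b.sum_sq_norm_inner_left]
  simp only [Submodule.inner_orthogonalProjectionOnto_eq_of_mem_right]

variable [CompleteSpace E] {w : E → E} {s : ι → ℝ} {e f : ι → E}

theorem norm_sq_apply_of_svd (he : Orthonormal 𝕜 e) (hf : Orthonormal 𝕜 f)
    (hsvd : ∀ x, w x = ∑' k, ((s k : 𝕜) * ⟪e k, x⟫_𝕜) • f k) (hs : Summable fun k => s k ^ 2)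
    (x : E) : ‖w x‖ ^ 2 = ∑' k, s k ^ 2 * ‖⟪e k, x⟫_𝕜‖ ^ 2 := by
  have hnorm : ∀ k, ‖(s k : 𝕜) * ⟪e k, x⟫_𝕜‖ ^ 2 = s k ^ 2 * ‖⟪e k, x⟫_𝕜‖ ^ 2 := fun k => by
    rw [norm_mul, mul_pow, RCLike.norm_ofReal, sq_abs]
  have hsum : Summable fun k => ‖(s k : 𝕜) * ⟪e k, x⟫_𝕜‖ ^ 2 := by
    simpa only [hnorm] using he.summable_sq_mul_norm_inner_sq hs x
  simp_rw [hsvd, hf.norm_tsum_smul_sq hsum, hnorm]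

theorem norm_sq_apply_self_of_svd (he : Orthonormal 𝕜 e) (hf : Orthonormal 𝕜 f)
    (hsvd : ∀ x, w x = ∑' k, ((s k : 𝕜) * ⟪e k, x⟫_𝕜) • f k) (hs : Summable fun k => s k ^ 2)
    (k : ι) : ‖w (e k)‖ ^ 2 = s k ^ 2 := by
  rw [norm_sq_apply_of_svd he hf hsvd hs, tsum_eq_single k fun j hj => by simp [he.2 hj]]
  simp [he.1 k]

theorem finrank_eq_tsum_of_svd_of_eqOn (he : Orthonormal 𝕜 e) (hf : Orthonormal 𝕜 f)
    (hsvd : ∀ x, w x = ∑' k, ((s k : 𝕜) * ⟪e k, x⟫_𝕜) • f k) (hs : Summable fun k => s k ^ 2)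
    (F : Submodule 𝕜 E) [FiniteDimensional 𝕜 F] (hfix : ∀ x ∈ F, w x = x) :
    (Module.finrank 𝕜 F : ℝ) = ∑' k, s k ^ 2 * ‖F.starProjection (e k)‖ ^ 2 := by
  let b := stdOrthonormalBasis 𝕜 F
  calc (Module.finrank 𝕜 F : ℝ) = ∑ i, ‖w (b i)‖ ^ 2 := by
        simp [hfix _ (b _).2, Submodule.norm_coe, b.orthonormal.1 _]
    _ = ∑ i, ∑' k, s k ^ 2 * ‖⟪e k, (b i : E)⟫_𝕜‖ ^ 2 := by
        simp_rw [norm_sq_apply_of_svd he hf hsvd hs]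
    _ = ∑' k, s k ^ 2 * ‖F.starProjection (e k)‖ ^ 2 := by
        rw [← Summable.tsum_finsetSum fun i _ => he.summable_sq_mul_norm_inner_sq hs _]
        simp_rw [b.norm_starProjection_sq_eq_sum, mul_sum]

theorem eq_zero_or_eq_one_of_svd_of_eqOn (he : Orthonormal 𝕜 e) (hf : Orthonormal 𝕜 f)
    (hsvd : ∀ x, w x = ∑' k, ((s k : 𝕜) * ⟪e k, x⟫_𝕜) • f k) (hs : Summable fun k => s k ^ 2)
    (hs0 : ∀ k, 0 ≤ s k) (F : Submodule 𝕜 E) [F.HasOrthogonalProjection]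
    (hfix : ∀ x ∈ F, w x = x) {k : ι}
    (hk : s k ^ 2 * ‖F.starProjection (e k)‖ ^ 2 = s k ^ 2) : s k = 0 ∨ s k = 1 := by
  refine or_iff_not_imp_left.2 fun h0 => ?_
  have hP : ‖F.starProjection (e k)‖ = ‖e k‖ := by
    have : ‖F.starProjection (e k)‖ ^ 2 = 1 :=
      mul_left_cancel₀ (pow_ne_zero 2 h0) (hk.trans (mul_one _).symm)
    rw [he.1 k]
    exact (pow_eq_one_iff_of_nonneg (norm_nonneg _) two_ne_zero).1 this
  have hw := norm_sq_apply_self_of_svd he hf hsvd hs k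
  rw [hfix _ ((F.mem_iff_norm_starProjection _).2 hP), he.1 k, one_pow] at hw
  exact (sq_eq_sq₀ (hs0 k) zero_le_one).1 (by simpa using hw.symm)

end

/-- Let `w` be a Hilbert–Schmidt operator on a complex Hilbert space `H`,
given by a singular value decomposition `w x = ∑ₖ s k • ⟪e k, x⟫ • f k` with `e`, `f`
orthonormal and `s` the non-increasing sequence of singular values, with
`‖w‖_HS² = ∑ₖ (s k)² ≤ n`.  If `w` restricts to the identity on an `n`-dimensional
subspace `F`, then `s k = 1` for `k < n`, `s k = 0` for `k ≥ n`, and `‖w‖_HS² = n`. -/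
theorem stmt1 {H : Type*} [NormedAddCommGroup H] [InnerProductSpace ℂ H] [CompleteSpace H]
    (w : H →L[ℂ] H) (n : ℕ) (hn : 0 < n)
    (s : ℕ → ℝ) (hs_nonneg : ∀ k, 0 ≤ s k) (hs_anti : Antitone s)
    (e f : ℕ → H) (he : Orthonormal ℂ e) (hf : Orthonormal ℂ f)
    (hsvd : ∀ x : H, w x = ∑' k, ((s k : ℂ) * ⟪e k, x⟫_ℂ) • f k)
    (hsum : Summable (fun k => s k ^ 2))
    (hHS : ∑' k, s k ^ 2 ≤ (n : ℝ))
    (F : Submodule ℂ H) (hF : Module.finrank ℂ F = n)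
    (hfix : ∀ x ∈ F, w x = x) :
    (∀ k < n, s k = 1) ∧ (∀ k, n ≤ k → s k = 0) ∧ ∑' k, s k ^ 2 = (n : ℝ) := by
  have : FiniteDimensional ℂ F := Module.finite_of_finrank_pos (hF ▸ hn)
  have hweights := finrank_eq_tsum_of_svd_of_eqOn he hf hsvd hsum F hfix
  rw [hF] at hweights
  have hP1 : ∀ k, ‖F.starProjection (e k)‖ ^ 2 ≤ 1 := fun k => by
    simpa [he.1 k] using pow_le_pow_left₀ (norm_nonneg _) (F.norm_starProjection_apply_le (e k)) 2
  have hfull := hsum.mul_eq_self_of_tsum_le_tsum_mul (fun k => sq_nonneg _)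
    (fun k => sq_nonneg _) hP1 (hHS.trans hweights.le)
  have h01 : ∀ k, s k = 0 ∨ s k = 1 := fun k =>
    eq_zero_or_eq_one_of_svd_of_eqOn he hf hsvd hsum hs_nonneg F hfix (hfull k)
  have htsum : ∑' k, s k ^ 2 = n := by simpa only [hfull] using hweights.symm
  have hsq : (fun k => s k ^ 2) = s := funext fun k => by rcases h01 k with h | h <;> simp [h]
  obtain ⟨hone, hzero⟩ := hs_anti.eq_one_of_lt_of_hasSum h01 (hsq ▸ htsum ▸ hsum.hasSum)
  exact ⟨hone, hzero, htsum⟩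
end

section
/- Let H₁, H₂ be Hilbert spaces and u : H₁ → H₂, v : H₂ → H₁ be operators such that v ∘ u has trace n and both the Hilbert–Schmidt norm of u and operator norm of v satisfy ‖u‖_HS · ‖v‖ ≤ √n with H₁ n-dimensional. Then the composition w := u ∘ v : H₂ → H₂ satisfies ‖w‖_HS ≤ √n and tr(w) = tr(v∘u) = n, hence (by the rigidity lemma applied on the n-dimensional range considerations) u ∘ v ∘ u = u, i.e., v ∘ u = id on H₁ when H₁ is n-dimensional. -/
/-!
With `b` an orthonormal basis of `H₁`, the Hilbert–Schmidt bound gives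
`∑ ‖v u bᵢ‖² ≤ ‖v‖² ∑ ‖u bᵢ‖² ≤ n`, while `Re tr (v ∘ u) = ∑ Re ⟪bᵢ, v u bᵢ⟫ = n`. Expanding,
`∑ ‖v u bᵢ - bᵢ‖² = ∑ ‖v u bᵢ‖² - 2 Re tr (v ∘ u) + n ≤ 0`, so `v ∘ u` fixes every `bᵢ`.
-/

open scoped InnerProductSpace

section

variable {𝕜 E F ι : Type*} [RCLike 𝕜] [Fintype ι]
  [NormedAddCommGroup E] [InnerProductSpace 𝕜 E] [NormedAddCommGroup F] [InnerProductSpace 𝕜 F]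

theorem ContinuousLinearMap.sum_norm_sq_apply_le (T : E →L[𝕜] F) (x : ι → E) :
    ∑ i, ‖T (x i)‖ ^ 2 ≤ ‖T‖ ^ 2 * ∑ i, ‖x i‖ ^ 2 := by
  rw [Finset.mul_sum]
  gcongr with i
  calc ‖T (x i)‖ ^ 2 ≤ (‖T‖ * ‖x i‖) ^ 2 := by gcongr; exact T.le_opNorm _
    _ = ‖T‖ ^ 2 * ‖x i‖ ^ 2 := mul_pow _ _ _

theorem ContinuousLinearMap.re_trace_adjoint_comp_self [CompleteSpace E] [CompleteSpace F]
    (T : E →L[𝕜] F) (b : OrthonormalBasis ι 𝕜 E) :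
    RCLike.re (LinearMap.trace 𝕜 E ((adjoint T).comp T : E →L[𝕜] E)) = ∑ i, ‖T (b i)‖ ^ 2 := by
  rw [LinearMap.trace_eq_sum_inner _ b, map_sum]
  congr 1 with i
  rw [coe_coe, comp_apply, adjoint_inner_right, inner_self_eq_norm_sq]

theorem LinearMap.eq_id_of_sum_norm_sq_le_of_le_re_trace (T : E →ₗ[𝕜] E)
    (b : OrthonormalBasis ι 𝕜 E) (hnorm : ∑ i, ‖T (b i)‖ ^ 2 ≤ Fintype.card ι)
    (htr : (Fintype.card ι : ℝ) ≤ RCLike.re (trace 𝕜 E T)) :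
    T = LinearMap.id := by
  have hexpand : ∑ i, ‖T (b i) - b i‖ ^ 2
      = ∑ i, ‖T (b i)‖ ^ 2 - 2 * RCLike.re (trace 𝕜 E T) + Fintype.card ι := by
    have hterm (i : ι) : ‖T (b i) - b i‖ ^ 2
        = ‖T (b i)‖ ^ 2 - 2 * RCLike.re ⟪b i, T (b i)⟫_𝕜 + 1 := by
      rw [@norm_sub_sq 𝕜, inner_re_symm, b.orthonormal.1 i, one_pow]
    simp only [hterm, Finset.sum_add_distrib, Finset.sum_sub_distrib, ← Finset.mul_sum,
      trace_eq_sum_inner T b, map_sum, Finset.sum_const, Finset.card_univ, nsmul_one]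
  have hzero : ∑ i, ‖T (b i) - b i‖ ^ 2 = 0 :=
    le_antisymm (by linarith) (Finset.sum_nonneg fun i _ => by positivity)
  refine b.toBasis.ext fun i => ?_
  have hi := (Finset.sum_eq_zero_iff_of_nonneg (fun j _ => by positivity)).1 hzero i
    (Finset.mem_univ i)
  simpa [sub_eq_zero] using hi

end

theorem stmt14_general {H₁ H₂ : Type*} [NormedAddCommGroup H₁] [InnerProductSpace ℂ H₁]
    [NormedAddCommGroup H₂] [InnerProductSpace ℂ H₂] [CompleteSpace H₂]
    [FiniteDimensional ℂ H₁] (n : ℕ) (hdim : Module.finrank ℂ H₁ = n)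
    (u : H₁ →L[ℂ] H₂) (v : H₂ →L[ℂ] H₁)
    (hHS : Real.sqrt
        ((LinearMap.trace ℂ H₁
          (((ContinuousLinearMap.adjoint u).comp u : H₁ →L[ℂ] H₁) : H₁ →ₗ[ℂ] H₁)).re) *
        ‖v‖ ≤ Real.sqrt n)
    (htr : LinearMap.trace ℂ H₁ ((v.comp u : H₁ →L[ℂ] H₁) : H₁ →ₗ[ℂ] H₁) = (n : ℂ)) :
    v.comp u = ContinuousLinearMap.id ℂ H₁ := by
  let b := stdOrthonormalBasis ℂ H₁
  have hcard : Fintype.card (Fin (Module.finrank ℂ H₁)) = n := by rw [Fintype.card_fin, hdim]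
  have hu : (LinearMap.trace ℂ H₁
      (((ContinuousLinearMap.adjoint u).comp u : H₁ →L[ℂ] H₁) : H₁ →ₗ[ℂ] H₁)).re
      = ∑ i, ‖u (b i)‖ ^ 2 :=
    u.re_trace_adjoint_comp_self b
  have hHS_sq : ‖v‖ ^ 2 * ∑ i, ‖u (b i)‖ ^ 2 ≤ n := by
    have hsq := pow_le_pow_left₀ (by positivity) hHS 2
    rwa [mul_pow, hu, Real.sq_sqrt (by positivity), Real.sq_sqrt (by positivity),
      mul_comm] at hsq
  refine ContinuousLinearMap.coe_injective
    (LinearMap.eq_id_of_sum_norm_sq_le_of_le_re_trace _ b ?_ ?_)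
  · rw [hcard]
    exact (v.sum_norm_sq_apply_le fun i => u (b i)).trans hHS_sq
  · rw [hcard, htr]
    simp

/-- Let `H₁` be an `n`-dimensional complex Hilbert space, `H₂` a complex
Hilbert space, `u : H₁ → H₂` and `v : H₂ → H₁` bounded operators with
`‖u‖_HS ⬝ ‖v‖ ≤ √n` (where `‖u‖_HS² = Re tr(u* u)`) and `tr(v ∘ u) = n`.
Then `v ∘ u = id` on `H₁`. -/
theorem stmt14 {H₁ H₂ : Type*} [NormedAddCommGroup H₁] [InnerProductSpace ℂ H₁]
    [NormedAddCommGroup H₂] [InnerProductSpace ℂ H₂] [CompleteSpace H₂]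
    [FiniteDimensional ℂ H₁] (n : ℕ) (hn : 0 < n) (hdim : Module.finrank ℂ H₁ = n)
    (u : H₁ →L[ℂ] H₂) (v : H₂ →L[ℂ] H₁)
    (hHS : Real.sqrt
        ((LinearMap.trace ℂ H₁
          (((ContinuousLinearMap.adjoint u).comp u : H₁ →L[ℂ] H₁) : H₁ →ₗ[ℂ] H₁)).re) *
        ‖v‖ ≤ Real.sqrt n)
    (htr : LinearMap.trace ℂ H₁ ((v.comp u : H₁ →L[ℂ] H₁) : H₁ →ₗ[ℂ] H₁) = (n : ℂ)) :
    v.comp u = ContinuousLinearMap.id ℂ H₁ :=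
  stmt14_general n hdim u v hHS htr
end
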